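/- Let G be a finite additive abelian group with gcd(|G|, 6) = 1, and let X, Z ⊆ G be dissociated sets with |Z| ≥ 5 and E[Z] ⊆ E[X]. Then Z ⊆ X. -/
import Mathlib


open Finset

/-- The restricted sumset `E[X] = X +̂ X = {x + x' : x, x' ∈ X, x ≠ x'}`. -/
def EHat {G : Type*} [AddCommGroup G] [DecidableEq G] (X : Finset G) : Finset G :=
  ((X ×ˢ X).filter fun p => p.1 ≠ p.2).image fun p => p.1 + p.2

/-- A set `X` is dissociated: any two representations of an element as a sum of four
elements of `X` agree up to permutation. -/
def Dissociated {G : Type*} [AddCommGroup G] (X : Finset G) : Prop :=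
  ∀ x₁ x₂ x₃ x₄ y₁ y₂ y₃ y₄ : G, x₁ ∈ X → x₂ ∈ X → x₃ ∈ X → x₄ ∈ X →
    y₁ ∈ X → y₂ ∈ X → y₃ ∈ X → y₄ ∈ X →
    x₁ + x₂ + x₃ + x₄ = y₁ + y₂ + y₃ + y₄ →
    ({x₁, x₂, x₃, x₄} : Multiset G) = {y₁, y₂, y₃, y₄}

set_option linter.unusedSectionVars false

section K5Helpers
variable {G : Type*} [AddCommGroup G]

lemma mcancel {x : G} {s t : Multiset G} (h : x ::ₘ s = x ::ₘ t) : s = t :=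
  (Multiset.cons_inj_right x).mp h

lemma rot3 (a b c : G) : ({a,b,c} : Multiset G) = c ::ₘ {a,b} := by
  simp only [Multiset.insert_eq_cons, ← Multiset.cons_zero c]
  rw [Multiset.cons_swap b c, Multiset.cons_swap a c, Multiset.cons_zero]

lemma rot4 (x p q r : G) : ({x,p,q,r} : Multiset G) = p ::ₘ q ::ₘ {x,r} := by
  simp only [Multiset.insert_eq_cons]
  rw [Multiset.cons_swap x p, Multiset.cons_swap x q]

lemma quad_split (a b c d : G) : ({a,b,c,d} : Multiset G) = {a,b} + {c,d} := by
  simp only [Multiset.insert_eq_cons, Multiset.cons_add, Multiset.singleton_add]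

lemma quad_of_pairs {a b c d a' b' c' d' : G} (h1 : ({a,b} : Multiset G) = {a',b'})
    (h2 : ({c,d} : Multiset G) = {c',d'}) : ({a,b,c,d} : Multiset G) = {a',b',c',d'} := by
  rw [quad_split, quad_split, h1, h2]

lemma cancel4 {x p q r s u v : G} (h : ({x,p,q,r} : Multiset G) = {x,s,u,v}) :
    ({p,q,r} : Multiset G) = {s,u,v} := by
  simp only [Multiset.insert_eq_cons] at h ⊢
  exact mcancel h

lemma pair_eq {a b c d : G} (h : ({a,b} : Multiset G) = {c,d}) :
    (a = c ∧ b = d) ∨ (a = d ∧ b = c) := by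
  have ha : a ∈ ({c,d} : Multiset G) := by rw [← h]; simp
  simp only [Multiset.insert_eq_cons, Multiset.mem_cons, Multiset.mem_singleton] at ha
  simp only [Multiset.insert_eq_cons] at h
  rcases ha with h1 | h1
  · subst h1
    exact Or.inl ⟨rfl, Multiset.singleton_inj.mp (mcancel h)⟩
  · subst h1
    rw [show (c ::ₘ {a} : Multiset G) = a ::ₘ {c} from Multiset.pair_comm c a] at h
    exact Or.inr ⟨rfl, Multiset.singleton_inj.mp (mcancel h)⟩

lemma pair_sum {a b c d : G} (h : ({a,b} : Multiset G) = {c,d}) : a + b = c + d := by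
  rcases pair_eq h with ⟨h1, h2⟩ | ⟨h1, h2⟩ <;> subst h1 <;> subst h2
  · rfl
  · exact add_comm a b

lemma pair_of_two_mem {p q u v : G} (hpq : p ≠ q) (hp : u = p ∨ v = p) (hq : u = q ∨ v = q) :
    ({u,v} : Multiset G) = {p,q} := by
  rcases hp with h1 | h1 <;> rcases hq with h2 | h2
  · exact absurd (h1.symm.trans h2) hpq
  · rw [h1, h2]
  · rw [h1, h2]; exact Multiset.pair_comm q p
  · exact absurd (h1.symm.trans h2) hpq

lemma stepA {u1 v1 u2 v2 u3 v3 u4 v4 a b d : G}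
    (h : ({u1,v1,u3,v3} : Multiset G) = {u2,v2,u4,v4})
    (s1 : u1 + v1 = a + b) (s4 : u4 + v4 = b + d) (had : a ≠ d) (h1 : u1 ≠ v1) :
    u1 = u2 ∨ u1 = v2 ∨ v1 = u2 ∨ v1 = v2 := by
  by_contra hc
  push_neg at hc
  obtain ⟨n1, n2, n3, n4⟩ := hc
  have hu : u1 ∈ ({u2,v2,u4,v4} : Multiset G) := by rw [← h]; simp
  have hv : v1 ∈ ({u2,v2,u4,v4} : Multiset G) := by rw [← h]; simp
  simp only [Multiset.insert_eq_cons, Multiset.mem_cons, Multiset.mem_singleton] at hu hv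
  have hu' : u1 = u4 ∨ u1 = v4 := by tauto
  have hv' : v1 = u4 ∨ v1 = v4 := by tauto
  have hsum : u1 + v1 = u4 + v4 := by
    rcases hu' with h' | h' <;> rcases hv' with h'' | h''
    · exact absurd (h'.trans h''.symm) h1
    · rw [h', h'']
    · rw [h', h'']; exact add_comm v4 u4
    · exact absurd (h'.trans h''.symm) h1
  apply had
  have : a + b = b + d := by rw [← s1, ← s4]; exact hsum
  rw [add_comm b d] at this
  exact add_right_cancel this

lemma stepB {p q u v s t : G} (hpq : p ≠ q) (h : ({p,u,v} : Multiset G) = {q,s,t}) :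
    ∃ r, ({s,t} : Multiset G) = {p,r} ∧ ({u,v} : Multiset G) = {q,r} := by
  have hp : p ∈ ({q,s,t} : Multiset G) := by rw [← h]; simp
  simp only [Multiset.insert_eq_cons, Multiset.mem_cons, Multiset.mem_singleton] at hp
  simp only [Multiset.insert_eq_cons] at h ⊢
  rcases hp with h' | h' | h'
  · exact absurd h' hpq
  · subst h'
    rw [Multiset.cons_swap q p] at h
    exact ⟨t, rfl, mcancel h⟩
  · subst h'
    rw [show (q ::ₘ s ::ₘ {p} : Multiset G) = p ::ₘ q ::ₘ {s} by
      rw [show (s ::ₘ {p} : Multiset G) = p ::ₘ {s} from Multiset.pair_comm s p,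
        Multiset.cons_swap q p]] at h
    exact ⟨s, Multiset.pair_comm s p, mcancel h⟩

end K5Helpers

theorem k5_lemma {G : Type*} [AddCommGroup G] [Fintype G] [DecidableEq G]
    (hG : Nat.gcd (Fintype.card G) 6 = 1)
    (X Z : Finset G) (hX : Dissociated X) (hZ : Dissociated Z)
    (hcard : 5 ≤ Z.card) (hsub : EHat Z ⊆ EHat X) : Z ⊆ X := by
  intro a ha
  -- obtain four further distinct elements of Z
  have h4 : 4 ≤ (Z.erase a).card := by rw [card_erase_of_mem ha]; omega
  obtain ⟨b, hb⟩ : (Z.erase a).Nonempty := Finset.card_pos.mp (by omega)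
  have h3 : 3 ≤ ((Z.erase a).erase b).card := by rw [card_erase_of_mem hb]; omega
  obtain ⟨c, hc⟩ : ((Z.erase a).erase b).Nonempty := Finset.card_pos.mp (by omega)
  have h2' : 2 ≤ (((Z.erase a).erase b).erase c).card := by rw [card_erase_of_mem hc]; omega
  obtain ⟨d, hd⟩ : (((Z.erase a).erase b).erase c).Nonempty := Finset.card_pos.mp (by omega)
  have h1' : 1 ≤ ((((Z.erase a).erase b).erase c).erase d).card := by
    rw [card_erase_of_mem hd]; omega
  obtain ⟨e, he⟩ : ((((Z.erase a).erase b).erase c).erase d).Nonempty :=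
    Finset.card_pos.mp (by omega)
  simp only [Finset.mem_erase] at hb hc hd he
  obtain ⟨hba, hbZ⟩ := hb
  obtain ⟨hcb, hca, hcZ⟩ := hc
  obtain ⟨hdc, hdb, hda, hdZ⟩ := hd
  obtain ⟨hed, hec, heb, hea, heZ⟩ := he
  -- representation of pair sums in X
  have getPair : ∀ u v : G, u ∈ Z → v ∈ Z → u ≠ v →
      ∃ x y, x ∈ X ∧ y ∈ X ∧ x ≠ y ∧ x + y = u + v := by
    intro u v hu hv huv
    have hmem : u + v ∈ EHat Z := by
      refine Finset.mem_image.mpr ⟨(u, v), ?_, rfl⟩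
      simp [Finset.mem_filter, Finset.mem_product, hu, hv, huv]
    have hmem' := hsub hmem
    obtain ⟨⟨x, y⟩, hxy, heq⟩ := Finset.mem_image.mp hmem'
    simp only [Finset.mem_filter, Finset.mem_product] at hxy
    exact ⟨x, y, hxy.1.1, hxy.1.2, hxy.2, heq⟩
  obtain ⟨x1, y1, hx1, hy1, hne1, hs1⟩ := getPair a b ha hbZ (Ne.symm hba)
  obtain ⟨x2, y2, hx2, hy2, hne2, hs2⟩ := getPair a c ha hcZ (Ne.symm hca)
  obtain ⟨x3, y3, hx3', hy3', hne3, hs3⟩ := getPair a d ha hdZ (Ne.symm hda)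
  obtain ⟨x4, y4, hx4', hy4', hne4, hs4⟩ := getPair a e ha heZ (Ne.symm hea)
  obtain ⟨x5, y5, hx5, hy5, hne5, hs5⟩ := getPair b c hbZ hcZ (Ne.symm hcb)
  obtain ⟨x6, y6, hx6, hy6, hne6, hs6⟩ := getPair b d hbZ hdZ (Ne.symm hdb)
  obtain ⟨x7, y7, hx7, hy7, hne7, hs7⟩ := getPair b e hbZ heZ (Ne.symm heb)
  obtain ⟨x8, y8, hx8, hy8, hne8, hs8⟩ := getPair c d hcZ hdZ (Ne.symm hdc)
  obtain ⟨x9, y9, hx9, hy9, hne9, hs9⟩ := getPair c e hcZ heZ (Ne.symm hec)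
  -- the four dissociativity equations
  have E1 : ({x1,y1,x8,y8} : Multiset G) = {x2,y2,x6,y6} := by
    refine hX x1 y1 x8 y8 x2 y2 x6 y6 hx1 hy1 hx8 hy8 hx2 hy2 hx6 hy6 ?_
    rw [add_assoc (x1 + y1), add_assoc (x2 + y2), hs1, hs8, hs2, hs6]; abel
  have E2 : ({x1,y1,x8,y8} : Multiset G) = {x3,y3,x5,y5} := by
    refine hX x1 y1 x8 y8 x3 y3 x5 y5 hx1 hy1 hx8 hy8 hx3' hy3' hx5 hy5 ?_
    rw [add_assoc (x1 + y1), add_assoc (x3 + y3), hs1, hs8, hs3, hs5]; abel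
  have E3 : ({x1,y1,x9,y9} : Multiset G) = {x2,y2,x7,y7} := by
    refine hX x1 y1 x9 y9 x2 y2 x7 y7 hx1 hy1 hx9 hy9 hx2 hy2 hx7 hy7 ?_
    rw [add_assoc (x1 + y1), add_assoc (x2 + y2), hs1, hs9, hs2, hs7]; abel
  have E4 : ({x1,y1,x9,y9} : Multiset G) = {x4,y4,x5,y5} := by
    refine hX x1 y1 x9 y9 x4 y4 x5 y5 hx1 hy1 hx9 hy9 hx4' hy4' hx5 hy5 ?_
    rw [add_assoc (x1 + y1), add_assoc (x4 + y4), hs1, hs9, hs4, hs5]; abel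
  -- common element of the pairs for a+b and a+c
  have hnorm : ∃ x p q, ({x1,y1} : Multiset G) = {x,p} ∧ ({x2,y2} : Multiset G) = {x,q} := by
    rcases stepA E1 hs1 hs6 (Ne.symm hda) hne1 with h | h | h | h
    · exact ⟨x1, y1, y2, rfl, by rw [h]⟩
    · exact ⟨x1, y1, x2, rfl, by rw [← h]; exact Multiset.pair_comm x2 x1⟩
    · exact ⟨y1, x1, y2, Multiset.pair_comm x1 y1, by rw [h]⟩
    · exact ⟨y1, x1, x2, Multiset.pair_comm x1 y1, by rw [← h]; exact Multiset.pair_comm x2 y1⟩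
  obtain ⟨x, p, q, hP1, hP2⟩ := hnorm
  have hxX : x ∈ X := by
    have hx : x ∈ ({x1,y1} : Multiset G) := by rw [hP1]; simp
    simp only [Multiset.insert_eq_cons, Multiset.mem_cons, Multiset.mem_singleton] at hx
    rcases hx with h | h
    · exact h ▸ hx1
    · exact h ▸ hy1
  have hxp : x ≠ p := by
    intro h
    rcases pair_eq hP1 with ⟨h1, h2⟩ | ⟨h1, h2⟩ <;> exact hne1 (by rw [h1, h2, h])
  have hxq : x ≠ q := by
    intro h
    rcases pair_eq hP2 with ⟨h1, h2⟩ | ⟨h1, h2⟩ <;> exact hne2 (by rw [h1, h2, h])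
  have hsxp : x + p = a + b := by rw [← pair_sum hP1]; exact hs1
  have hsxq : x + q = a + c := by rw [← pair_sum hP2]; exact hs2
  have hpq : p ≠ q := by
    intro h
    apply hcb
    have : a + b = a + c := by rw [← hsxp, ← hsxq, h]
    exact (add_left_cancel this).symm
  -- step B for d and e
  have E1c : ({p,x8,y8} : Multiset G) = {q,x6,y6} :=
    cancel4 ((quad_of_pairs hP1 rfl).symm.trans (E1.trans (quad_of_pairs hP2 rfl)))
  obtain ⟨r, hbd, hcd⟩ := stepB hpq E1c
  have E3c : ({p,x9,y9} : Multiset G) = {q,x7,y7} :=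
    cancel4 ((quad_of_pairs hP1 rfl).symm.trans (E3.trans (quad_of_pairs hP2 rfl)))
  obtain ⟨r', hbe, hce⟩ := stepB hpq E3c
  have E2n : ({x,p,q,r} : Multiset G) = {x3,y3,x5,y5} :=
    (quad_of_pairs hP1 hcd).symm.trans E2
  have E4n : ({x,p,q,r'} : Multiset G) = {x4,y4,x5,y5} :=
    (quad_of_pairs hP1 hce).symm.trans E4
  -- key claim: the pair for b+c is {p,q}
  have hkey : ({x5,y5} : Multiset G) = {p,q} := by
    by_cases hx3c : x = x3 ∨ x = y3
    · -- x belongs to the pair of a+d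
      have hAD : ∃ s, ({x3,y3} : Multiset G) = {x,s} := by
        rcases hx3c with h | h
        · exact ⟨y3, by rw [h]⟩
        · exact ⟨x3, by rw [h]; exact Multiset.pair_comm x3 y3⟩
      obtain ⟨s, hAD⟩ := hAD
      have C : ({p,q,r} : Multiset G) = {s,x5,y5} :=
        cancel4 (E2n.trans (quad_of_pairs hAD rfl))
      have hsmem : s = p ∨ s = q ∨ s = r := by
        have : s ∈ ({p,q,r} : Multiset G) := by rw [C]; simp
        simpa [Multiset.insert_eq_cons, Multiset.mem_cons, Multiset.mem_singleton] using this
      rcases hsmem with h | h | h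
      · exfalso; apply hdb
        have h1 : a + d = x + p := by rw [← h, ← pair_sum hAD]; exact hs3.symm
        rw [hsxp] at h1
        exact add_left_cancel h1
      · exfalso; apply hdc
        have h1 : a + d = x + q := by rw [← h, ← pair_sum hAD]; exact hs3.symm
        rw [hsxq] at h1
        exact add_left_cancel h1
      · subst h
        rw [rot3 p q s, show ({s,x5,y5} : Multiset G) = s ::ₘ {x5,y5} from rfl] at C
        exact (mcancel C).symm
    · push_neg at hx3c
      obtain ⟨n1, n2⟩ := hx3c
      -- the pair of a+d must be {p,q}
      have hADb : x3 = x ∨ x3 = p ∨ y3 = x ∨ y3 = p :=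
        stepA (E2.symm.trans (quad_of_pairs hP1 rfl)) hs3
          (by rw [hs8]; exact add_comm c d) (Ne.symm hca) hne3
      have hADc : x3 = x ∨ x3 = q ∨ y3 = x ∨ y3 = q :=
        stepA (E2.symm.trans (E1.trans (quad_of_pairs hP2 rfl))) hs3
          (by rw [hs6]; exact add_comm b d) (Ne.symm hba) hne3
      have hp3 : x3 = p ∨ y3 = p := by
        rcases hADb with h | h | h | h
        · exact absurd h.symm n1
        · exact Or.inl h
        · exact absurd h.symm n2
        · exact Or.inr h
      have hq3 : x3 = q ∨ y3 = q := by
        rcases hADc with h | h | h | h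
        · exact absurd h.symm n1
        · exact Or.inl h
        · exact absurd h.symm n2
        · exact Or.inr h
      have hADpq : ({x3,y3} : Multiset G) = {p,q} := pair_of_two_mem hpq hp3 hq3
      have hbc5 : ({x,r} : Multiset G) = {x5,y5} := by
        have C2 : ({x,p,q,r} : Multiset G) = {p,q,x5,y5} :=
          E2n.trans (quad_of_pairs hADpq rfl)
        rw [rot4 x p q r, show ({p,q,x5,y5} : Multiset G) = p ::ₘ q ::ₘ {x5,y5} from rfl] at C2
        exact mcancel (mcancel C2)
      -- now use e
      exfalso
      by_cases hx4c : x = x4 ∨ x = y4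
      · have hAE : ∃ s', ({x4,y4} : Multiset G) = {x,s'} := by
          rcases hx4c with h | h
          · exact ⟨y4, by rw [h]⟩
          · exact ⟨x4, by rw [h]; exact Multiset.pair_comm x4 y4⟩
        obtain ⟨s', hAE⟩ := hAE
        have C' : ({p,q,r'} : Multiset G) = {s',x5,y5} :=
          cancel4 (E4n.trans (quad_of_pairs hAE rfl))
        have hsmem : s' = p ∨ s' = q ∨ s' = r' := by
          have : s' ∈ ({p,q,r'} : Multiset G) := by rw [C']; simp
          simpa [Multiset.insert_eq_cons, Multiset.mem_cons, Multiset.mem_singleton] using this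
        rcases hsmem with h | h | h
        · apply heb
          have h1 : a + e = x + p := by rw [← h, ← pair_sum hAE]; exact hs4.symm
          rw [hsxp] at h1
          exact add_left_cancel h1
        · apply hec
          have h1 : a + e = x + q := by rw [← h, ← pair_sum hAE]; exact hs4.symm
          rw [hsxq] at h1
          exact add_left_cancel h1
        · subst h
          rw [rot3 p q s', show ({s',x5,y5} : Multiset G) = s' ::ₘ {x5,y5} from rfl] at C'
          have hpq5 : ({p,q} : Multiset G) = {x5,y5} := mcancel C'
          have : ({x,r} : Multiset G) = {p,q} := hbc5.trans hpq5.symm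
          rcases pair_eq this with ⟨h1, _⟩ | ⟨h1, _⟩
          · exact hxp h1
          · exact hxq h1
      · push_neg at hx4c
        obtain ⟨m1, m2⟩ := hx4c
        have hAEb : x4 = x ∨ x4 = p ∨ y4 = x ∨ y4 = p :=
          stepA (E4.symm.trans (quad_of_pairs hP1 rfl)) hs4
            (by rw [hs9]; exact add_comm c e) (Ne.symm hca) hne4
        have hAEc : x4 = x ∨ x4 = q ∨ y4 = x ∨ y4 = q :=
          stepA (E4.symm.trans (E3.trans (quad_of_pairs hP2 rfl))) hs4
            (by rw [hs7]; exact add_comm b e) (Ne.symm hba) hne4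
        have hp4 : x4 = p ∨ y4 = p := by
          rcases hAEb with h | h | h | h
          · exact absurd h.symm m1
          · exact Or.inl h
          · exact absurd h.symm m2
          · exact Or.inr h
        have hq4 : x4 = q ∨ y4 = q := by
          rcases hAEc with h | h | h | h
          · exact absurd h.symm m1
          · exact Or.inl h
          · exact absurd h.symm m2
          · exact Or.inr h
        have hAEpq : ({x4,y4} : Multiset G) = {p,q} := pair_of_two_mem hpq hp4 hq4
        apply hed
        have h1 : a + e = a + d := by
          rw [← hs4, ← hs3, pair_sum hAEpq, pair_sum hADpq]
        exact add_left_cancel h1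
  -- conclude
  have hbcpq : p + q = b + c := by rw [← pair_sum hkey]; exact hs5
  have h2 : x + x + (p + q) = a + a + (b + c) := by
    calc x + x + (p + q) = (x + p) + (x + q) := by abel
    _ = (a + b) + (a + c) := by rw [hsxp, hsxq]
    _ = a + a + (b + c) := by abel
  rw [hbcpq] at h2
  have haa : x + x = a + a := add_right_cancel h2
  have hsm : (2 : ℕ) • (a - x) = 0 := by
    rw [two_nsmul]
    have : (a - x) + (a - x) = (a + a) - (x + x) := by abel
    rw [this, ← haa, sub_self]
  have hord1 : addOrderOf (a - x) ∣ 2 := addOrderOf_dvd_iff_nsmul_eq_zero.mpr hsm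
  have hord2 : addOrderOf (a - x) ∣ Fintype.card G := addOrderOf_dvd_card
  have hord3 : addOrderOf (a - x) ∣ 1 := hG ▸ Nat.dvd_gcd hord2 (hord1.trans (by norm_num))
  have hax : a = x := by
    have h0 : a - x = 0 := AddMonoid.addOrderOf_eq_one_iff.mp (Nat.dvd_one.mp hord3)
    exact sub_eq_zero.mp h0
  exact hax ▸ hxX
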